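/- Let λ > √2 and let f : [0,1] ∖ {c} → [0,1] (0 < c < 1) be such that f is continuous and strictly increasing on [0,c) and on (c,1], with f(x) − f(y) ≥ λ(x − y) whenever x > y lie in the same branch, and with lim_{x→c⁻} f(x) = 1 and lim_{x→c⁺} f(x) = 0. Then for every nondegenerate interval J ⊆ [0,1] there exists n ≥ 0 such that c lies in the interior of f^n(J) or f^n(J) meets both components [0,c) and (c,1]. -/

import Mathlib

/-!
Suppose no image `f^[n] '' J` meets both branches `[0, c)` and `(c, 1]`. Fix `1 < μ < λ`.
Inductively, `f^[n] '' J` contains a closed interval lying in one branch, of length at least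
`μ ^ n` times a fixed positive constant: `f` maps such an interval onto an interval at least `λ`
times longer, and since that image does not cross `c`, cutting off the endpoint `c` if necessary
costs arbitrarily little length. The lengths are bounded by `1`, a contradiction.
-/

open Set

def IsBranchInterval (c : ℝ) (T : Set ℝ) (u v : ℝ) : Prop :=
  Icc u v ⊆ T ∧ (Icc u v ⊆ Ico 0 c ∨ Icc u v ⊆ Ioc c 1)

namespace IsBranchInterval

variable {c u v : ℝ} {T T' : Set ℝ}

theorem mono (h : IsBranchInterval c T u v) (hT : T ⊆ T') : IsBranchInterval c T' u v :=
  ⟨h.1.trans hT, h.2⟩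

theorem sub_le_one (hc0 : 0 ≤ c) (hc1 : c ≤ 1) (h : IsBranchInterval c T u v) : v - u ≤ 1 := by
  rcases le_or_gt u v with huv | hvu
  · have hunit : Icc u v ⊆ Icc 0 1 := by
      rcases h.2 with hB | hB
      · exact hB.trans (Ico_subset_Icc_self.trans (Icc_subset_Icc_right hc1))
      · exact hB.trans (Ioc_subset_Icc_self.trans (Icc_subset_Icc_left hc0))
    linarith [(hunit (left_mem_Icc.2 huv)).1, (hunit (right_mem_Icc.2 huv)).2]
  · linarith

end IsBranchInterval

theorem exists_isBranchInterval_Icc_of_notMem_Ioo {c p q ℓ : ℝ} (hp : 0 ≤ p) (hq : q ≤ 1)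
    (hℓ : ℓ < q - p) (hc : c ∉ Ioo p q) :
    ∃ u v, IsBranchInterval c (Icc p q) u v ∧ ℓ ≤ v - u := by
  by_cases hcp : c ≤ p
  · refine ⟨q - ℓ, q, ⟨Icc_subset_Icc (by linarith) le_rfl, Or.inr ?_⟩, by linarith⟩
    exact fun x hx => ⟨by linarith [hx.1], hx.2.trans hq⟩
  · have hqc : q ≤ c := not_lt.1 fun hcq => hc ⟨not_le.1 hcp, hcq⟩
    refine ⟨p, p + ℓ, ⟨Icc_subset_Icc le_rfl (by linarith), Or.inl ?_⟩, by linarith⟩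
    exact fun x hx => ⟨hp.trans hx.1, by linarith [hx.2]⟩

theorem exists_isBranchInterval_image {f : ℝ → ℝ} {B T : Set ℝ} {c lam μ u v : ℝ}
    (hcont : ContinuousOn f B)
    (hexp : ∀ x ∈ B, ∀ y ∈ B, y ≤ x → lam * (x - y) ≤ f x - f y)
    (hmaps : MapsTo f B (Icc 0 1)) (hμ : μ < lam) (huv : u < v)
    (hB : Icc u v ⊆ B) (hT : Icc u v ⊆ T)
    (hcross : ¬((f '' T ∩ Ico 0 c).Nonempty ∧ (f '' T ∩ Ioc c 1).Nonempty)) :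
    ∃ u' v', IsBranchInterval c (f '' T) u' v' ∧ μ * (v - u) ≤ v' - u' := by
  have hu : u ∈ Icc u v := left_mem_Icc.2 huv.le
  have hv : v ∈ Icc u v := right_mem_Icc.2 huv.le
  have hstretch : μ * (v - u) < f v - f u := calc
    μ * (v - u) < lam * (v - u) := mul_lt_mul_of_pos_right hμ (sub_pos.2 huv)
    _ ≤ f v - f u := hexp v (hB hv) u (hB hu) huv.le
  have himage : Icc (f u) (f v) ⊆ f '' T :=
    (intermediate_value_Icc huv.le (hcont.mono hB)).trans (image_mono hT)
  have hc : c ∉ Ioo (f u) (f v) := fun ⟨hlt, hgt⟩ =>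
    hcross ⟨⟨f u, himage (left_mem_Icc.2 (hlt.trans hgt).le), (hmaps (hB hu)).1, hlt⟩,
      ⟨f v, himage (right_mem_Icc.2 (hlt.trans hgt).le), hgt, (hmaps (hB hv)).2⟩⟩
  obtain ⟨u', v', hI, hlen⟩ :=
    exists_isBranchInterval_Icc_of_notMem_Ioo (hmaps (hB hu)).1 (hmaps (hB hv)).2 hstretch hc
  exact ⟨u', v', hI.mono himage, hlen⟩

theorem exists_isBranchInterval_iterate {f : ℝ → ℝ} {J : Set ℝ} {c lam μ u v : ℝ}
    (hcontL : ContinuousOn f (Ico 0 c)) (hcontR : ContinuousOn f (Ioc c 1))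
    (hexpL : ∀ x ∈ Ico 0 c, ∀ y ∈ Ico 0 c, y ≤ x → lam * (x - y) ≤ f x - f y)
    (hexpR : ∀ x ∈ Ioc c 1, ∀ y ∈ Ioc c 1, y ≤ x → lam * (x - y) ≤ f x - f y)
    (hrange : ∀ x ∈ Ico 0 c ∪ Ioc c 1, f x ∈ Icc 0 1)
    (hμ0 : 0 < μ) (hμ : μ < lam) (huv : u < v) (hJ : IsBranchInterval c J u v)
    (hcross : ∀ n : ℕ,
      ¬((f^[n] '' J ∩ Ico 0 c).Nonempty ∧ (f^[n] '' J ∩ Ioc c 1).Nonempty))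
    (n : ℕ) : ∃ u' v', IsBranchInterval c (f^[n] '' J) u' v' ∧ μ ^ n * (v - u) ≤ v' - u' := by
  induction n with
  | zero => exact ⟨u, v, by simpa using hJ, by simp⟩
  | succ n ih =>
    obtain ⟨u', v', ⟨hT, hB⟩, hlen⟩ := ih
    have huv' : u' < v' := by
      have : 0 < μ ^ n * (v - u) := mul_pos (pow_pos hμ0 n) (sub_pos.2 huv)
      linarith
    have hcross' := hcross (n + 1)
    rw [Function.iterate_succ', image_comp] at hcross' ⊢
    obtain ⟨u'', v'', hI, hlen'⟩ :
        ∃ u'' v'', IsBranchInterval c (f '' (f^[n] '' J)) u'' v'' ∧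
          μ * (v' - u') ≤ v'' - u'' := by
      rcases hB with hB | hB
      · exact exists_isBranchInterval_image hcontL hexpL (fun x hx => hrange x (.inl hx))
          hμ huv' hB hT hcross'
      · exact exists_isBranchInterval_image hcontR hexpR (fun x hx => hrange x (.inr hx))
          hμ huv' hB hT hcross'
    refine ⟨u'', v'', hI, ?_⟩
    calc μ ^ (n + 1) * (v - u) = μ * (μ ^ n * (v - u)) := by ring
      _ ≤ μ * (v' - u') := by gcongr
      _ ≤ v'' - u'' := hlen'

theorem lorenz_map_locally_eventually_crosses_general
    (c lam : ℝ) (hc0 : 0 < c) (hc1 : c < 1) (hlam : Real.sqrt 2 < lam)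
    (f : ℝ → ℝ)
    (hcontL : ContinuousOn f (Set.Ico 0 c))
    (hcontR : ContinuousOn f (Set.Ioc c 1))
    (hexpL : ∀ x ∈ Set.Ico 0 c, ∀ y ∈ Set.Ico 0 c, y ≤ x →
      lam * (x - y) ≤ f x - f y)
    (hexpR : ∀ x ∈ Set.Ioc c 1, ∀ y ∈ Set.Ioc c 1, y ≤ x →
      lam * (x - y) ≤ f x - f y)
    (hrange : ∀ x ∈ Set.Ico 0 c ∪ Set.Ioc c 1, f x ∈ Set.Icc 0 1) :
    ∀ J : Set ℝ, J.OrdConnected → J ⊆ Set.Icc 0 1 → J.Nontrivial →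
      ∃ n : ℕ, c ∈ interior (f^[n] '' J) ∨
        ((f^[n] '' J) ∩ Set.Ico 0 c).Nonempty ∧
        ((f^[n] '' J) ∩ Set.Ioc c 1).Nonempty := by
  intro J hJ hJsub hJnt
  by_contra hcon
  have hcross : ∀ n : ℕ,
      ¬((f^[n] '' J ∩ Ico 0 c).Nonempty ∧ (f^[n] '' J ∩ Ioc c 1).Nonempty) :=
    fun n h => hcon ⟨n, .inr h⟩
  obtain ⟨a, ha, b, hb, hab⟩ := hJnt.exists_lt
  have hc : c ∉ Ioo a b := fun ⟨hac, hcb⟩ =>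
    hcross 0 ⟨⟨a, ⟨a, ha, rfl⟩, (hJsub ha).1, hac⟩, ⟨b, ⟨b, hb, rfl⟩, hcb, (hJsub hb).2⟩⟩
  obtain ⟨u, v, hI, hlen⟩ := exists_isBranchInterval_Icc_of_notMem_Ioo (hJsub ha).1 (hJsub hb).2
    (show (b - a) / 2 < b - a by linarith) hc
  have huv : u < v := by linarith
  obtain ⟨μ, hμ1, hμ⟩ := exists_between (Real.one_lt_sqrt_two.trans hlam)
  obtain ⟨N, hN⟩ := pow_unbounded_of_one_lt (1 / (v - u)) hμ1
  obtain ⟨u', v', hI', hlen'⟩ := exists_isBranchInterval_iterate hcontL hcontR hexpL hexpR hrange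
    (zero_lt_one.trans hμ1) hμ huv (hI.mono (hJ.out ha hb)) hcross N
  have hgrow : 1 < μ ^ N * (v - u) := (div_lt_iff₀ (sub_pos.2 huv)).1 hN
  linarith [hI'.sub_le_one hc0.le hc1.le]

theorem lorenz_map_locally_eventually_crosses
    (c lam : ℝ) (hc0 : 0 < c) (hc1 : c < 1) (hlam : Real.sqrt 2 < lam)
    (f : ℝ → ℝ)
    (hcontL : ContinuousOn f (Set.Ico 0 c))
    (hcontR : ContinuousOn f (Set.Ioc c 1))
    (hmonoL : StrictMonoOn f (Set.Ico 0 c))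
    (hmonoR : StrictMonoOn f (Set.Ioc c 1))
    (hexpL : ∀ x ∈ Set.Ico 0 c, ∀ y ∈ Set.Ico 0 c, y ≤ x →
      lam * (x - y) ≤ f x - f y)
    (hexpR : ∀ x ∈ Set.Ioc c 1, ∀ y ∈ Set.Ioc c 1, y ≤ x →
      lam * (x - y) ≤ f x - f y)
    (hrange : ∀ x ∈ Set.Ico 0 c ∪ Set.Ioc c 1, f x ∈ Set.Icc 0 1)
    (hlimL : Filter.Tendsto f (nhdsWithin c (Set.Iio c)) (nhds 1))
    (hlimR : Filter.Tendsto f (nhdsWithin c (Set.Ioi c)) (nhds 0)) :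
    ∀ J : Set ℝ, J.OrdConnected → J ⊆ Set.Icc 0 1 → J.Nontrivial →
      ∃ n : ℕ, c ∈ interior (f^[n] '' J) ∨
        ((f^[n] '' J) ∩ Set.Ico 0 c).Nonempty ∧
        ((f^[n] '' J) ∩ Set.Ioc c 1).Nonempty :=
  lorenz_map_locally_eventually_crosses_general c lam hc0 hc1 hlam f hcontL hcontR hexpL hexpR
    hrange
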